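/- arXiv:1911.01722 — 2 statements merged into one kernel-verified Lean document; each statement's English description precedes it below -/
import Mathlib

section
/- Let p ≡ 7 or 31 (mod 36) be a prime. Then there exists a nonsingular perfect B[-2,4](p) splitter set if and only if 6 is a cubic residue modulo p and neither 2 nor 3 is a cubic residue modulo p. -/
/-- `b·[-k1,k2]* = {b·j mod q : -k1 ≤ j ≤ k2, j ≠ 0}` as a finset of `ZMod q`. -/
noncomputable def bStar (k1 k2 q : ℕ) (b : ZMod q) : Finset (ZMod q) :=
  ((Finset.Icc (-(k1 : ℤ)) (k2 : ℤ)).erase 0).image (fun j : ℤ => b * (j : ZMod q))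

/-- `B` is a `B[-k1,k2](q)` splitter set. -/
def IsSplitter (k1 k2 q : ℕ) (B : Finset (ZMod q)) : Prop :=
  (∀ b ∈ B, (bStar k1 k2 q b).card = k1 + k2) ∧
  ((B : Set (ZMod q)).Pairwise fun b b' => Disjoint (bStar k1 k2 q b) (bStar k1 k2 q b'))

/-- `B` is a perfect splitter set: `|B| = (q-1)/(k1+k2)` with exact division. -/
def IsPerfectSplitter (k1 k2 q : ℕ) (B : Finset (ZMod q)) : Prop :=
  IsSplitter k1 k2 q B ∧ (k1 + k2) * B.card = q - 1

/-!
Put `m = (p - 1) / 3`, `a = 2 ^ m` and `c = 3 ^ m`; these are cube roots of unity, and by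
Euler's criterion for cubes the right-hand side says `a ≠ 1` and `c = a ^ 2`.

If `B` is a perfect splitter, the sets `b • S`, `S = {-2, -1, 1, 2, 3, 4}`, partition
`(ZMod p)ˣ`, so for `0 < t < p - 1` the vanishing power sum `∑_{x ≠ 0} x ^ t` factors as
`(∑_{b ∈ B} b ^ t) (∑_{j ∈ S} j ^ t)`. If `∑ b ^ m` and `∑ b ^ (2m)` both vanished, summing
`1 + b ^ m + b ^ (2m)` over `B` would give `|B| = 3 #{b | b ^ m = 1}`, so `18 ∣ p - 1`,
which `p ≡ 7, 31 (mod 36)` forbids. Hence `∑_S j ^ m = 2 + 2a + c + a²` or its conjugate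
vanishes, and that forces `a ≠ 1`, `c = a²`.

Conversely, if `a ≠ 1` and `c = a²`, then, `-1` and `3` being non-residues, the pair
`(x ^ m, x ^ ((p - 1) / 2))` takes six distinct values on `S`; it is invariant under
multiplication by sixth powers, so the subgroup of sixth powers is a perfect splitter.
-/

open Finset Polynomial

theorem IsCyclic.mem_powMonoidHom_range_iff {G : Type*} [CommGroup G] [IsCyclic G] [Finite G]
    {n : ℕ} (hn : n ∣ Nat.card G) (y : G) :
    y ∈ (powMonoidHom n : G →* G).range ↔ y ^ (Nat.card G / n) = 1 := by
  have hle : (powMonoidHom n : G →* G).range ≤ (powMonoidHom (Nat.card G / n)).ker := by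
    rintro _ ⟨x, rfl⟩
    simp [MonoidHom.mem_ker, ← pow_mul, Nat.mul_div_cancel' hn, pow_card_eq_one']
  rw [Subgroup.eq_of_le_of_card_ge hle ?_, MonoidHom.mem_ker, powMonoidHom_apply]
  rw [IsCyclic.card_powMonoidHom_ker, IsCyclic.card_powMonoidHom_range, Nat.gcd_eq_right hn,
    Nat.gcd_eq_right (Nat.div_dvd_of_dvd hn)]

theorem FiniteField.exists_pow_eq_iff {K : Type*} [Field K] [Fintype K] {n : ℕ}
    (hn : n ∣ Fintype.card K - 1) {y : K} (hy : y ≠ 0) :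
    (∃ x : K, x ≠ 0 ∧ x ^ n = y) ↔ y ^ ((Fintype.card K - 1) / n) = 1 := by
  classical
  have hcard : Nat.card Kˣ = Fintype.card K - 1 := by
    rw [Nat.card_eq_fintype_card, Fintype.card_units]
  have key := IsCyclic.mem_powMonoidHom_range_iff (hcard ▸ hn) (Units.mk0 y hy)
  rw [hcard, ← Units.val_inj, Units.val_pow_eq_pow_val, Units.val_mk0, Units.val_one] at key
  rw [← key]
  constructor
  · rintro ⟨x, hx, rfl⟩
    exact ⟨Units.mk0 x hx, Units.ext (by simp)⟩
  · rintro ⟨u, hu⟩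
    exact ⟨u, u.ne_zero, by simpa using congrArg Units.val hu⟩

theorem ZMod.natCast_ne_zero_of_lt {p n : ℕ} (h0 : 0 < n) (h : n < p) : (n : ZMod p) ≠ 0 := by
  rw [Ne, ZMod.natCast_eq_zero_iff]
  exact Nat.not_dvd_of_pos_of_lt h0 h

theorem ZMod.pow_div_pow_eq_one {p k : ℕ} [Fact p.Prime] (hk : k ∣ p - 1) {y : ZMod p}
    (hy : y ≠ 0) : (y ^ ((p - 1) / k)) ^ k = 1 := by
  rw [← pow_mul, Nat.div_mul_cancel hk, ZMod.pow_card_sub_one_eq_one hy]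

theorem ZMod.three_pow_div_two_eq_neg_one {p : ℕ} [Fact p.Prime] (h3 : p % 3 = 1)
    (h4 : p % 4 = 3) : (3 : ZMod p) ^ (p / 2) = -1 := by
  have : Fact (Nat.Prime 3) := ⟨Nat.prime_three⟩
  have hns : ¬IsSquare ((3 : ℕ) : ZMod p) := by
    rw [ZMod.exists_sq_eq_prime_iff_of_mod_four_eq_three h4 rfl (by omega), not_not,
      ZMod.natCast_mod p 3 |>.symm, h3, Nat.cast_one]
    exact ⟨1, by simp⟩
  rw [Nat.cast_ofNat] at hns
  have h30 : (3 : ZMod p) ≠ 0 := fun h => hns (h ▸ IsSquare.zero)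
  exact (ZMod.pow_div_two_eq_neg_one_or_one p h30).resolve_left
    fun h => hns ((ZMod.euler_criterion p h30).mpr h)

noncomputable def splitterMultipliers (k1 k2 : ℕ) : Finset ℤ := (Icc (-(k1 : ℤ)) k2).erase 0

theorem bStar_eq_image (k1 k2 q : ℕ) (b : ZMod q) :
    bStar k1 k2 q b = (splitterMultipliers k1 k2).image (fun j : ℤ => b * j) := rfl

theorem card_splitterMultipliers (k1 k2 : ℕ) : #(splitterMultipliers k1 k2) = k1 + k2 := by
  rw [splitterMultipliers, card_erase_of_mem (by simp), Int.card_Icc]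
  omega

theorem intCast_ne_zero_of_mem_splitterMultipliers {k1 k2 p : ℕ} (hk1 : k1 < p) (hk2 : k2 < p)
    {j : ℤ} (hj : j ∈ splitterMultipliers k1 k2) : (j : ZMod p) ≠ 0 := by
  simp only [splitterMultipliers, mem_erase, mem_Icc] at hj
  rw [Ne, ZMod.intCast_zmod_eq_zero_iff_dvd]
  intro hdvd
  exact hj.1 (Int.eq_zero_of_abs_lt_dvd hdvd (by rw [abs_lt]; omega))

namespace IsSplitter

variable {k1 k2 q : ℕ} {B : Finset (ZMod q)}

theorem ne_zero (hk : 1 < k1 + k2) (hB : IsSplitter k1 k2 q B) {b : ZMod q} (hb : b ∈ B) :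
    b ≠ 0 := by
  rintro rfl
  have hsub : bStar k1 k2 q 0 ⊆ {0} := by simp [bStar_eq_image, subset_iff]
  have := card_le_card hsub
  rw [hB.1 0 hb, card_singleton] at this
  omega

theorem injOn (hB : IsSplitter k1 k2 q B) {b : ZMod q} (hb : b ∈ B) :
    Set.InjOn (fun j : ℤ => b * (j : ZMod q)) (splitterMultipliers k1 k2) := by
  classical
  rw [← card_image_iff, ← bStar_eq_image, hB.1 b hb, card_splitterMultipliers]

end IsSplitter

namespace IsPerfectSplitter

variable {k1 k2 p : ℕ} [Fact p.Prime] {B : Finset (ZMod p)}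

theorem biUnion_bStar (hk1 : k1 < p) (hk2 : k2 < p) (hk : 1 < k1 + k2)
    (hB : IsPerfectSplitter k1 k2 p B) : B.biUnion (bStar k1 k2 p) = univ.erase 0 := by
  classical
  refine eq_of_subset_of_card_le (fun x hx => ?_) ?_
  · obtain ⟨b, hb, hx⟩ := mem_biUnion.mp hx
    obtain ⟨j, hj, rfl⟩ := mem_image.mp ((bStar_eq_image ..) ▸ hx)
    exact mem_erase.mpr ⟨mul_ne_zero (hB.1.ne_zero hk hb)
      (intCast_ne_zero_of_mem_splitterMultipliers hk1 hk2 hj), mem_univ _⟩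
  · rw [card_biUnion hB.1.2, sum_congr rfl hB.1.1, sum_const, smul_eq_mul, mul_comm, hB.2,
      card_erase_of_mem (mem_univ _), card_univ, ZMod.card]

theorem sum_pow_mul_sum_pow_eq_zero (hk1 : k1 < p) (hk2 : k2 < p) (hk : 1 < k1 + k2)
    (hB : IsPerfectSplitter k1 k2 p B) {t : ℕ} (ht0 : 0 < t) (ht : t < p - 1) :
    (∑ b ∈ B, b ^ t) * ∑ j ∈ splitterMultipliers k1 k2, (j : ZMod p) ^ t = 0 := by
  classical
  calc (∑ b ∈ B, b ^ t) * ∑ j ∈ splitterMultipliers k1 k2, (j : ZMod p) ^ t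
      = ∑ b ∈ B, ∑ x ∈ bStar k1 k2 p b, x ^ t := by
        simp_rw [sum_mul, mul_sum, ← mul_pow]
        refine sum_congr rfl fun b hb => ?_
        rw [bStar_eq_image, sum_image (hB.1.injOn hb)]
    _ = ∑ x ∈ univ.erase 0, x ^ t := by rw [← sum_biUnion hB.1.2, hB.biUnion_bStar hk1 hk2 hk]
    _ = 0 := by
        rw [sum_erase _ (zero_pow ht0.ne')]
        exact FiniteField.sum_pow_lt_card_sub_one _ t (by rwa [ZMod.card])

end IsPerfectSplitter

theorem isSplitter_of_injOn_of_invariant {k1 k2 p : ℕ} [Fact p.Prime] {α : Type*}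
    (hk1 : k1 < p) (hk2 : k2 < p) {B : Finset (ZMod p)} (χ : ZMod p → α)
    (hχB : ∀ b ∈ B, ∀ x, χ (b * x) = χ x)
    (hχ : Set.InjOn (fun j : ℤ => χ j) (splitterMultipliers k1 k2)) :
    IsSplitter k1 k2 p B := by
  have hinj (b) (hb : b ∈ B) :
      Set.InjOn (fun j : ℤ => b * (j : ZMod p)) (splitterMultipliers k1 k2) :=
    fun j hj j' hj' h => hχ hj hj' (by simpa [hχB b hb] using congrArg χ h)
  refine ⟨fun b hb => ?_, fun b hb b' hb' hne => ?_⟩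
  · rw [bStar_eq_image, card_image_of_injOn (hinj b hb), card_splitterMultipliers]
  · dsimp only
    rw [bStar_eq_image, bStar_eq_image, disjoint_left]
    rintro _ hx hx'
    obtain ⟨j, hj, rfl⟩ := mem_image.mp hx
    obtain ⟨j', hj', hjj⟩ := mem_image.mp hx'
    obtain rfl : j' = j := hχ hj' hj (by simpa [hχB _ hb, hχB _ hb'] using congrArg χ hjj)
    exact hne (mul_right_cancel₀ (intCast_ne_zero_of_mem_splitterMultipliers hk1 hk2 hj) hjj).symm

theorem one_add_add_sq_of_pow_three_eq_one {K : Type*} [Field K] [DecidableEq K] {z : K}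
    (hz : z ^ 3 = 1) : 1 + z + z ^ 2 = if z = 1 then 3 else 0 := by
  split_ifs with h
  · rw [h]; norm_num
  · have : (z - 1) * (1 + z + z ^ 2) = 0 := by linear_combination hz
    exact (mul_eq_zero.mp this).resolve_left (sub_ne_zero.mpr h)

theorem card_eq_three_mul_card_filter {K : Type*} [Field K] [DecidableEq K] {B : Finset K}
    {m : ℕ} (hB : ∀ b ∈ B, (b ^ m) ^ 3 = 1) (h1 : ∑ b ∈ B, b ^ m = 0)
    (h2 : ∑ b ∈ B, b ^ (2 * m) = 0) : (#B : K) = 3 * #{b ∈ B | b ^ m = 1} := by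
  calc (#B : K) = ∑ b ∈ B, (1 + b ^ m + (b ^ m) ^ 2) := by
        simp_rw [sum_add_distrib, ← pow_mul, mul_comm m, h1, h2]; simp
    _ = ∑ b ∈ B, if b ^ m = 1 then 3 else 0 :=
        sum_congr rfl fun b hb => one_add_add_sq_of_pow_three_eq_one (hB b hb)
    _ = 3 * #{b ∈ B | b ^ m = 1} := by rw [← sum_filter, sum_const, nsmul_eq_mul, mul_comm]

theorem mul_eq_one_and_ne_one_iff {K : Type*} [Field K] {a c : K} (ha : a ^ 3 = 1)
    (hc : c ^ 3 = 1) : (a * c = 1 ∧ ¬a = 1 ∧ ¬c = 1) ↔ (a ≠ 1 ∧ c = a ^ 2) := by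
  constructor
  · rintro ⟨hac, ha1, -⟩
    exact ⟨ha1, by linear_combination (-c) * ha + a ^ 2 * hac⟩
  · rintro ⟨ha1, rfl⟩
    exact ⟨by linear_combination ha, ha1, fun h => ha1 (by linear_combination ha - a * h)⟩

theorem ne_one_and_eq_sq_of_two_add_two_mul_add_eq_zero {K : Type*} [Field K]
    (h2 : (2 : K) ≠ 0) (h3 : (3 : K) ≠ 0) (h7 : (7 : K) ≠ 0) {a c : K} (ha : a ^ 3 = 1)
    (hc : c ^ 3 = 1) (hσ : 2 + 2 * a + c + a ^ 2 = 0) : a ≠ 1 ∧ c = a ^ 2 := by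
  have ha1 : a ≠ 1 := by
    rintro rfl
    -- `a = 1` forces `c = -5`, and `(-5) ^ 3 = 1` means `126 = 0`
    have : (2 : K) * 3 * 3 * 7 = 0 := by linear_combination -hc + (c ^ 2 - 5 * c + 25) * hσ
    exact mul_ne_zero (mul_ne_zero (mul_ne_zero h2 h3) h3) h7 this
  have hq : a ^ 2 + a + 1 = 0 := by
    have : (a - 1) * (a ^ 2 + a + 1) = 0 := by linear_combination ha
    exact (mul_eq_zero.mp this).resolve_left (sub_ne_zero.mpr ha1)
  exact ⟨ha1, by linear_combination hσ - 2 * hq⟩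

theorem sum_pow_splitterMultipliers_two_four {R : Type*} [CommRing R] {t : ℕ} (ht : Even t) :
    ∑ j ∈ splitterMultipliers 2 4, (j : R) ^ t = 2 + 2 * 2 ^ t + 3 ^ t + (2 ^ t) ^ 2 := by
  have h4 : (4 : R) ^ t = (2 ^ t) ^ 2 := by rw [← pow_mul, mul_comm, pow_mul]; norm_num
  rw [show splitterMultipliers 2 4 = {-2, -1, 1, 2, 3, 4} by decide]
  simp [ht.neg_pow, h4]
  ring

theorem injOn_pow_pair_splitterMultipliers_two_four {K : Type*} [Field K] {m h : ℕ} {a s : K}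
    (hm : Even m) (hh : Odd h) (h2 : (2 : K) ≠ 0) (h2m : (2 : K) ^ m = a)
    (h3m : (3 : K) ^ m = a ^ 2) (ha3 : a ^ 3 = 1) (ha1 : a ≠ 1) (h2h : (2 : K) ^ h = s)
    (hs : s ^ 2 = 1) (h3h : (3 : K) ^ h = -1) :
    Set.InjOn (fun j : ℤ => ((j : K) ^ m, (j : K) ^ h)) (splitterMultipliers 2 4) := by
  have h4m : (4 : K) ^ m = a ^ 2 := by rw [← h2m, ← pow_mul, mul_comm, pow_mul]; norm_num
  have h4h : (4 : K) ^ h = 1 := by rw [← hs, ← h2h, ← pow_mul, mul_comm, pow_mul]; norm_num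
  have ha2 : a ^ 2 ≠ 1 := fun h => ha1 (by linear_combination ha3 - a * h)
  have haa : a ^ 2 ≠ a := fun h => ha1 (by linear_combination ha3 - (a + 1) * h)
  have hs0 : s ≠ 0 := by rintro rfl; simp at hs
  have hss : -s ≠ s := fun h => mul_ne_zero h2 hs0 (by linear_combination -h)
  have h11 : (-1 : K) ≠ 1 := fun h => h2 (by linear_combination -h)
  rw [show splitterMultipliers 2 4 = {-2, -1, 1, 2, 3, 4} by decide]
  intro j hj j' hj' hjj
  simp only [coe_insert, coe_singleton, Set.mem_insert_iff, Set.mem_singleton_iff] at hj hj'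
  rcases hj with rfl | rfl | rfl | rfl | rfl | rfl <;>
    rcases hj' with rfl | rfl | rfl | rfl | rfl | rfl <;>
    simp [hm.neg_pow, hh.neg_pow, h2m, h2h, h3m, h3h, h4m, h4h, ha1, ha2, haa, hss, h11, ha1.symm,
      ha2.symm, haa.symm, hss.symm, h11.symm] at hjj ⊢

theorem IsPerfectSplitter.two_pow_ne_one_and_three_pow_eq_sq {p : ℕ} [Fact p.Prime]
    (hmod : p % 36 = 7 ∨ p % 36 = 31) (hp7 : p ≠ 7) {B : Finset (ZMod p)}
    (hB : IsPerfectSplitter 2 4 p B) :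
    (2 : ZMod p) ^ ((p - 1) / 3) ≠ 1 ∧
      (3 : ZMod p) ^ ((p - 1) / 3) = ((2 : ZMod p) ^ ((p - 1) / 3)) ^ 2 := by
  classical
  set m := (p - 1) / 3
  have hm : Even m := Nat.even_iff.mpr (by omega)
  have h2 : (2 : ZMod p) ≠ 0 := by exact_mod_cast ZMod.natCast_ne_zero_of_lt two_pos (by omega)
  have h3 : (3 : ZMod p) ≠ 0 := by exact_mod_cast ZMod.natCast_ne_zero_of_lt three_pos (by omega)
  have h7 : (7 : ZMod p) ≠ 0 := by
    rw [Ne, ← Nat.cast_ofNat, ZMod.natCast_eq_zero_iff,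
      Nat.prime_dvd_prime_iff_eq Fact.out (by norm_num)]
    exact hp7
  have hcube {y : ZMod p} (hy : y ≠ 0) : (y ^ m) ^ 3 = 1 := ZMod.pow_div_pow_eq_one (by omega) hy
  have hsum {t : ℕ} (ht : Even t) (ht0 : 0 < t) (htp : t < p - 1)
      (hσ : 2 + 2 * (2 : ZMod p) ^ t + 3 ^ t + (2 ^ t) ^ 2 ≠ 0) : ∑ b ∈ B, b ^ t = 0 := by
    have := hB.sum_pow_mul_sum_pow_eq_zero (by omega) (by omega) (by norm_num) ht0 htp
    rwa [sum_pow_splitterMultipliers_two_four ht, mul_eq_zero, or_iff_left hσ] at this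
  have hσ : 2 + 2 * (2 : ZMod p) ^ m + 3 ^ m + (2 ^ m) ^ 2 = 0 ∨
      2 + 2 * (2 : ZMod p) ^ (2 * m) + 3 ^ (2 * m) + (2 ^ (2 * m)) ^ 2 = 0 := by
    by_contra! hne
    have hcard := card_eq_three_mul_card_filter
      (fun b hb => hcube (hB.1.ne_zero (by norm_num) hb))
      (hsum hm (by omega) (by omega) hne.1) (hsum (hm.mul_left 2) (by omega) (by omega) hne.2)
    have hle := card_filter_le B (fun b => b ^ m = 1)
    have hB6 : 6 * #B = p - 1 := hB.2
    rw [← Nat.cast_ofNat, ← Nat.cast_mul, ZMod.natCast_eq_natCast_iff',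
      Nat.mod_eq_of_lt (by omega), Nat.mod_eq_of_lt (by omega)] at hcard
    omega
  rcases hσ with hσ | hσ
  · exact ne_one_and_eq_sq_of_two_add_two_mul_add_eq_zero h2 h3 h7 (hcube h2) (hcube h3) hσ
  · simp only [pow_mul'] at hσ
    obtain ⟨ha1, hc⟩ := ne_one_and_eq_sq_of_two_add_two_mul_add_eq_zero h2 h3 h7
      (by linear_combination (2 ^ m) ^ 3 * hcube h2 + hcube h2)
      (by linear_combination (3 ^ m) ^ 3 * hcube h3 + hcube h3) hσ
    refine ⟨fun h => ha1 (by rw [h, one_pow]), ?_⟩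
    linear_combination (-(3 : ZMod p) ^ m) * hcube h3 + ((3 ^ m) ^ 2 + (2 ^ m) ^ 4) * hc +
      (2 ^ m) ^ 2 * ((2 ^ m) ^ 3 + 1) * hcube h2

theorem isPerfectSplitter_two_four_nthRootsFinset {p : ℕ} [Fact p.Prime]
    (hmod : p % 36 = 7 ∨ p % 36 = 31) (ha1 : (2 : ZMod p) ^ ((p - 1) / 3) ≠ 1)
    (hc : (3 : ZMod p) ^ ((p - 1) / 3) = ((2 : ZMod p) ^ ((p - 1) / 3)) ^ 2) :
    IsPerfectSplitter 2 4 p (nthRootsFinset ((p - 1) / 6) (1 : ZMod p)) := by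
  set n := (p - 1) / 6
  have hn : 0 < n := by omega
  have h2 : (2 : ZMod p) ≠ 0 := by exact_mod_cast ZMod.natCast_ne_zero_of_lt two_pos (by omega)
  have hχB (b) (hb : b ∈ nthRootsFinset n (1 : ZMod p)) (x : ZMod p) :
      ((b * x) ^ ((p - 1) / 3), (b * x) ^ (p / 2)) = (x ^ ((p - 1) / 3), x ^ (p / 2)) := by
    rw [mem_nthRootsFinset hn] at hb
    rw [mul_pow, mul_pow, show (p - 1) / 3 = n * 2 by omega, show p / 2 = n * 3 by omega,
      pow_mul, pow_mul b, hb, one_pow, one_pow, one_mul, one_mul]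
  have hs : ((2 : ZMod p) ^ (p / 2)) ^ 2 = 1 := by
    rw [show p / 2 = (p - 1) / 2 by omega]
    exact ZMod.pow_div_pow_eq_one (by omega) h2
  have hχ := injOn_pow_pair_splitterMultipliers_two_four (Nat.even_iff.mpr (by omega))
    (Nat.odd_iff.mpr (by omega)) h2 rfl hc (ZMod.pow_div_pow_eq_one (by omega) h2) ha1 rfl hs
    (ZMod.three_pow_div_two_eq_neg_one (by omega) (by omega))
  refine ⟨isSplitter_of_injOn_of_invariant (by omega) (by omega)
    (fun x : ZMod p => (x ^ ((p - 1) / 3), x ^ (p / 2))) hχB hχ, ?_⟩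
  obtain ⟨g, hg⟩ := IsCyclic.exists_ofOrder_eq_natCard (α := (ZMod p)ˣ)
  have hgp : IsPrimitiveRoot (g : ZMod p) (p - 1) := by
    rw [IsPrimitiveRoot.coe_units_iff, ← ZMod.card_units p, ← Nat.card_eq_fintype_card, ← hg]
    exact IsPrimitiveRoot.orderOf g
  rw [(hgp.pow_of_dvd (by norm_num) (by omega : 6 ∣ p - 1)).card_nthRootsFinset]
  omega

theorem stmt_8 (p : ℕ) (hp : p.Prime) (hmod : p % 36 = 7 ∨ p % 36 = 31) :
    (∃ B : Finset (ZMod p), IsPerfectSplitter 2 4 p B ∧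
        Nat.Coprime p (Nat.factorial 4)) ↔
      ((∃ x : ZMod p, x ≠ 0 ∧ x ^ 3 = 6) ∧
        ¬(∃ x : ZMod p, x ≠ 0 ∧ x ^ 3 = 2) ∧
        ¬(∃ x : ZMod p, x ≠ 0 ∧ x ^ 3 = 3)) := by
  have := Fact.mk hp
  have hcube {y : ZMod p} (hy : y ≠ 0) := ZMod.card p ▸
    FiniteField.exists_pow_eq_iff (K := ZMod p) (n := 3) (by rw [ZMod.card]; omega) hy
  have h2 : (2 : ZMod p) ≠ 0 := by exact_mod_cast ZMod.natCast_ne_zero_of_lt two_pos (by omega)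
  have h3 : (3 : ZMod p) ≠ 0 := by exact_mod_cast ZMod.natCast_ne_zero_of_lt three_pos (by omega)
  rw [show (6 : ZMod p) = 2 * 3 by norm_num, hcube (mul_ne_zero h2 h3), hcube h2, hcube h3, mul_pow,
    mul_eq_one_and_ne_one_iff (ZMod.pow_div_pow_eq_one (by omega) h2)
      (ZMod.pow_div_pow_eq_one (by omega) h3)]
  constructor
  · rintro ⟨B, hB, -⟩
    rcases eq_or_ne p 7 with rfl | hp7
    -- in `ZMod 7` the right-hand side holds outright
    · decide +revert
    · exact hB.two_pow_ne_one_and_three_pow_eq_sq hmod hp7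
  · rintro ⟨ha1, hc⟩
    exact ⟨_, isPerfectSplitter_two_four_nthRootsFinset hmod ha1 hc,
      hp.coprime_factorial_of_lt (by omega)⟩
end

section
/- Let p ≡ 9 (mod 16) be a prime. Then there does not exist a nonsingular perfect B[-4,4](p) splitter set. -/
open Finset

theorem IsCyclic.exists_monoidHom_zmod_surjective {G : Type*} [Group G] [h : IsCyclic G] {k : ℕ}
    (hk : k ∣ Nat.card G) : ∃ χ : G →* Multiplicative (ZMod k), Function.Surjective χ :=
  ⟨(ZMod.castHom hk (ZMod k)).toAddMonoidHom.toMultiplicative.comp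
      (zmodCyclicMulEquiv h).symm.toMonoidHom,
    (ZMod.castHom_surjective hk).comp (zmodCyclicMulEquiv h).symm.surjective⟩

theorem MonoidHom.card_mul_card_fiber_of_surjective {G M : Type*} [Group G] [Fintype G] [Group M]
    [Fintype M] [DecidableEq M] (f : G →* M) (hf : Function.Surjective f) (y : M) :
    Fintype.card M * #{g | f g = y} = Fintype.card G := by
  calc Fintype.card M * #{g | f g = y} = ∑ z, #{g | f g = z} := by
        simp [sum_congr rfl fun z _ ↦ card_fiber_eq_of_mem_range f (hf z) (hf y)]
    _ = Fintype.card G := (card_eq_sum_card_fiberwise fun _ _ ↦ mem_univ _).symm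

def IsLogOnNonzero {K A : Type*} [MulZeroClass K] [Add A] (F : K → A) : Prop :=
  ∀ x y : K, x ≠ 0 → y ≠ 0 → F (x * y) = F x + F y

namespace IsLogOnNonzero

variable {K A : Type*} [AddGroup A]

theorem map_one [MulZeroOneClass K] [Nontrivial K] {F : K → A} (hF : IsLogOnNonzero F) :
    F 1 = 0 := by
  simpa using hF 1 1 one_ne_zero one_ne_zero

theorem map_pow [MonoidWithZero K] [NoZeroDivisors K] [Nontrivial K] {F : K → A}
    (hF : IsLogOnNonzero F) {y : K} (hy : y ≠ 0) (n : ℕ) : F (y ^ n) = n • F y := by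
  induction n with
  | zero => simpa using hF.map_one
  | succ n ih => rw [pow_succ, hF _ _ (pow_ne_zero n hy) hy, ih, succ_nsmul]

theorem map_pow_eq_zero [MonoidWithZero K] [NoZeroDivisors K] [Nontrivial K] {k : ℕ} [NeZero k]
    {F : K → ZMod k} (hF : IsLogOnNonzero F) {y : K} (hy : y ^ k ≠ 0) : F (y ^ k) = 0 := by
  rw [hF.map_pow (ne_zero_pow (NeZero.ne k) hy), nsmul_eq_mul, ZMod.natCast_self, zero_mul]

theorem map_neg [Ring K] [Nontrivial K] {F : K → A} (hF : IsLogOnNonzero F) (hneg : F (-1) = 0)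
    {x : K} (hx : x ≠ 0) : F (-x) = F x := by
  rw [neg_eq_neg_one_mul, hF _ _ (neg_ne_zero.2 one_ne_zero) hx, hneg, zero_add]

end IsLogOnNonzero

theorem FiniteField.exists_isLogOnNonzero_zmod {K : Type*} [Field K] [Fintype K] [DecidableEq K]
    {k : ℕ} (hk : k ∣ Fintype.card K - 1) :
    ∃ F : K → ZMod k, IsLogOnNonzero F ∧
      ∀ r, k * #{x | x ≠ 0 ∧ F x = r} = Fintype.card K - 1 := by
  have : NeZero k :=
    ⟨by rintro rfl; simp [Nat.sub_eq_zero_iff_le, Fintype.one_lt_card.not_ge] at hk⟩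
  obtain ⟨χ, hχ⟩ := IsCyclic.exists_monoidHom_zmod_surjective (G := Kˣ) (k := k)
    (by rwa [Nat.card_eq_fintype_card, Fintype.card_units])
  refine ⟨fun x ↦ if hx : x = 0 then 0 else (χ (Units.mk0 x hx)).toAdd, fun x y hx hy ↦ ?_,
    fun r ↦ ?_⟩
  · simp only [mul_ne_zero hx hy, hx, hy, dite_false]
    rw [← toAdd_mul, ← map_mul, Units.mk0_mul]
  · rw [← Fintype.card_units, ← χ.card_mul_card_fiber_of_surjective hχ (.ofAdd r)]
    congr 1
    · simp
    · symm
      refine card_bij (fun u _ ↦ (u : K)) (fun u hu ↦ ?_) (fun u _ v _ ↦ Units.ext)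
        fun x hx ↦ ?_
      · simp_all
      · obtain ⟨hx0, hxr⟩ := (mem_filter.1 hx).2
        simp only [dif_neg hx0] at hxr
        exact ⟨Units.mk0 x hx0, by simp [← hxr], rfl⟩

namespace ZMod

theorem ofNat_ne_zero_of_lt {p n : ℕ} [n.AtLeastTwo] (hnp : n < p) :
    (ofNat(n) : ZMod p) ≠ 0 := by
  rw [Ne, ← Nat.cast_ofNat, natCast_eq_zero_iff]
  exact fun h ↦ (NeZero.ne n) (Nat.eq_zero_of_dvd_of_lt h hnp)

variable {p : ℕ} [Fact p.Prime]

theorem exists_pow_four_eq_neg_one (hp : p % 8 = 1) : ∃ y : ZMod p, y ^ 4 = -1 := by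
  obtain ⟨i, hi⟩ := exists_sq_eq_neg_one_iff.2 (by omega : p % 4 ≠ 3)
  have hi0 : i ≠ 0 := by rintro rfl; simp at hi
  obtain ⟨y, rfl⟩ : IsSquare i := by
    rw [euler_criterion p hi0, show p / 2 = 2 * (p / 4) by omega, pow_mul, sq, ← hi,
      Even.neg_one_pow ⟨p / 8, by omega⟩]
  exact ⟨y, by rw [hi]; ring⟩

theorem exists_pow_four_eq_four (hp : p % 8 = 1) : ∃ y : ZMod p, y ^ 4 = 4 := by
  obtain ⟨y, hy⟩ := (exists_sq_eq_two_iff (by omega)).2 (.inl hp)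
  exact ⟨y, by linear_combination -(y * y + 2) * hy⟩

end ZMod

section Splitter

variable {k1 k2 p : ℕ} {B : Finset (ZMod p)}

theorem card_erase_zero_Icc : #((Icc (-(k1 : ℤ)) k2).erase 0) = k1 + k2 := by
  rw [card_erase_of_mem (by simp), Int.card_Icc]
  omega

theorem intCast_ne_zero_of_mem_erase_zero_Icc (hk1 : k1 < p) (hk2 : k2 < p) {j : ℤ}
    (hj : j ∈ (Icc (-(k1 : ℤ)) k2).erase 0) : (j : ZMod p) ≠ 0 := by
  obtain ⟨hj0, hj⟩ := mem_erase.1 hj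
  rw [mem_Icc] at hj
  rw [Ne, ZMod.intCast_zmod_eq_zero_iff_dvd]
  exact fun h ↦ hj0 (Int.eq_zero_of_abs_lt_dvd h (abs_lt.2 ⟨by omega, by omega⟩))

theorem card_bStar_zero_le_one : #(bStar k1 k2 p 0) ≤ 1 :=
  card_le_one.2 fun x hx y hy ↦ by
    obtain ⟨_, _, rfl⟩ := mem_image.1 hx
    obtain ⟨_, _, rfl⟩ := mem_image.1 hy
    simp

theorem IsSplitter.ne_zero_s10 (hB : IsSplitter k1 k2 p B) (hk : 2 ≤ k1 + k2) {b : ZMod p}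
    (hb : b ∈ B) : b ≠ 0 := by
  rintro rfl
  have := hB.1 0 hb ▸ card_bStar_zero_le_one
  omega

variable [Fact p.Prime]

theorem zero_notMem_bStar (hk1 : k1 < p) (hk2 : k2 < p) {b : ZMod p} (hb : b ≠ 0) :
    0 ∉ bStar k1 k2 p b := by
  simp only [bStar, mem_image, not_exists, not_and]
  exact fun j hj ↦ mul_ne_zero hb (intCast_ne_zero_of_mem_erase_zero_Icc hk1 hk2 hj)

theorem IsPerfectSplitter.biUnion_bStar_s10 (hB : IsPerfectSplitter k1 k2 p B) (hk1 : k1 < p)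
    (hk2 : k2 < p) (hk : 2 ≤ k1 + k2) : B.biUnion (bStar k1 k2 p) = univ.erase 0 := by
  refine eq_of_subset_of_card_le (fun x hx ↦ ?_) ?_
  · obtain ⟨b, hb, hxb⟩ := mem_biUnion.1 hx
    exact mem_erase.2 ⟨fun h ↦ zero_notMem_bStar hk1 hk2 (hB.1.ne_zero_s10 hk hb) (h ▸ hxb),
      mem_univ _⟩
  · rw [card_biUnion fun b hb b' hb' ↦ hB.1.2 hb hb', sum_congr rfl hB.1.1, sum_const,
      smul_eq_mul, mul_comm, hB.2, card_erase_of_mem (mem_univ _), card_univ, ZMod.card]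

theorem IsPerfectSplitter.card_fiber_eq_sum {A : Type*} [Add A] [DecidableEq A]
    {F : ZMod p → A} (hF : IsLogOnNonzero F) (hB : IsPerfectSplitter k1 k2 p B) (hk1 : k1 < p)
    (hk2 : k2 < p) (hk : 2 ≤ k1 + k2) (r : A) :
    #{x | x ≠ 0 ∧ F x = r} =
      ∑ j ∈ (Icc (-(k1 : ℤ)) k2).erase 0, #{b ∈ B | F b + F j = r} := by
  have hblock (b) (hb : b ∈ B) : #{x ∈ bStar k1 k2 p b | F x = r} =
      #{j ∈ (Icc (-(k1 : ℤ)) k2).erase 0 | F b + F (j : ℤ) = r} := by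
    have hinj := injOn_of_card_image_eq ((hB.1.1 b hb).trans card_erase_zero_Icc.symm)
    rw [bStar, filter_image, card_image_of_injOn (hinj.mono (filter_subset _ _))]
    refine congrArg card (filter_congr fun j hj ↦ ?_)
    rw [hF _ _ (hB.1.ne_zero_s10 hk hb) (intCast_ne_zero_of_mem_erase_zero_Icc hk1 hk2 hj)]
  calc #{x | x ≠ 0 ∧ F x = r} = #{x ∈ B.biUnion (bStar k1 k2 p) | F x = r} := by
        congr 1
        ext x
        simp [hB.biUnion_bStar_s10 hk1 hk2 hk]
    _ = ∑ b ∈ B, #{x ∈ bStar k1 k2 p b | F x = r} := by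
        rw [filter_biUnion, card_biUnion fun b hb b' hb' h ↦
          disjoint_filter_filter (hB.1.2 hb hb' h)]
    _ = _ := by
        rw [sum_congr rfl hblock]
        simp only [card_filter]
        exact sum_comm

theorem sum_erase_zero_Icc_four {M : Type*} [AddCommMonoid M] (g : ℤ → M) :
    ∑ j ∈ (Icc (-((4 : ℕ) : ℤ)) (4 : ℕ)).erase 0, g j =
      g (-4) + g (-3) + g (-2) + g (-1) + g 1 + g 2 + g 3 + g 4 := by
  rw [show (Icc (-((4 : ℕ) : ℤ)) (4 : ℕ)).erase 0 = {-4, -3, -2, -1, 1, 2, 3, 4} by decide]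
  simp [add_assoc]

theorem IsPerfectSplitter.card_fiber_eq_of_zmod_four (hB : IsPerfectSplitter 4 4 p B)
    (hp : 4 < p) {F : ZMod p → ZMod 4} (hF : IsLogOnNonzero F) (hneg : F (-1) = 0)
    (hfour : F 4 = 0) (r : ZMod 4) :
    #{x | x ≠ 0 ∧ F x = r} =
      2 * (2 * #{b ∈ B | F b = r} + #{b ∈ B | F b = r - F 2} + #{b ∈ B | F b = r - F 3}) := by
  have h2 : (2 : ZMod p) ≠ 0 := ZMod.ofNat_ne_zero_of_lt (by omega : 2 < p)
  have h3 : (3 : ZMod p) ≠ 0 := ZMod.ofNat_ne_zero_of_lt (by omega : 3 < p)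
  have h4 : (4 : ZMod p) ≠ 0 := ZMod.ofNat_ne_zero_of_lt hp
  rw [hB.card_fiber_eq_sum hF hp hp (by norm_num), sum_erase_zero_Icc_four]
  push_cast
  simp only [hF.map_neg hneg one_ne_zero, hF.map_neg hneg h2, hF.map_neg hneg h3,
    hF.map_neg hneg h4, hF.map_one, hfour, add_zero, ← eq_sub_iff_add_eq]
  ring

end Splitter

/-- `ℤ/4` splits into two pairs `{r, r + (t - a)}`, each with an odd sum of `β`. -/
theorem even_sum_of_odd_add_sub (β : ZMod 4 → ℕ) (a t : ZMod 4)
    (h : ∀ r, Odd (β (r - a) + β (r - t))) : Even (∑ r, β r) := by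
  have h0 := h 0; have h1 := h 1; have h2 := h 2; have h3 := h 3
  simp only [Nat.odd_iff] at h0 h1 h2 h3
  rw [show (univ : Finset (ZMod 4)) = {0, 1, 2, 3} by decide, Nat.even_iff]
  simp +decide only [sum_insert, sum_singleton, mem_insert, mem_singleton]
  have cases (x : ZMod 4) : x = 0 ∨ x = 1 ∨ x = 2 ∨ x = 3 := by revert x; decide
  rcases cases a with rfl | rfl | rfl | rfl <;> rcases cases t with rfl | rfl | rfl | rfl <;>
    reduce_mod_char at h0 h1 h2 h3 <;> omega

theorem stmt_10 (p : ℕ) (hp : p.Prime) (hmod : p % 16 = 9) :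
    ¬ ∃ B : Finset (ZMod p), IsPerfectSplitter 4 4 p B ∧
        Nat.Coprime p (Nat.factorial 4) := by
  rintro ⟨B, hB, -⟩
  have : Fact p.Prime := ⟨hp⟩
  have hcard := hB.2
  obtain ⟨F, hF, hclass⟩ := FiniteField.exists_isLogOnNonzero_zmod (K := ZMod p) (k := 4)
    (by rw [ZMod.card]; omega)
  obtain ⟨i, hi⟩ := ZMod.exists_pow_four_eq_neg_one (p := p) (by omega)
  obtain ⟨z, hz⟩ := ZMod.exists_pow_four_eq_four (p := p) (by omega)
  have hneg : F (-1) = 0 := hi ▸ hF.map_pow_eq_zero (hi ▸ neg_ne_zero.2 one_ne_zero)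
  have hfour : F 4 = 0 :=
    hz ▸ hF.map_pow_eq_zero (hz ▸ ZMod.ofNat_ne_zero_of_lt (by omega : 4 < p))
  have hodd (r : ZMod 4) : Odd (#{b ∈ B | F b = r - F 2} + #{b ∈ B | F b = r - F 3}) := by
    have := hclass r
    rw [hB.card_fiber_eq_of_zmod_four (by omega) hF hneg hfour, ZMod.card] at this
    rw [Nat.odd_iff]
    omega
  have heven := even_sum_of_odd_add_sub (fun r ↦ #{b ∈ B | F b = r}) _ _ hodd
  rw [← card_eq_sum_card_fiberwise fun _ _ ↦ mem_univ _, Nat.even_iff] at heven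
  omega
end
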